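/- arXiv:2410.01135 — 5 statements merged into one kernel-verified Lean document; each statement's English description precedes it below -/
import Mathlib

section
/- Let e₁, e₂, f₁, f₂ ∈ ℂ³ satisfy e₁ ⬝ e₁ = f₁ ⬝ f₁, e₁ ⬝ e₂ = f₁ ⬝ f₂ and e₂ ⬝ e₂ = f₂ ⬝ f₂, and let c ∈ ℂ with c ≠ 0 and c² = (e₁ × e₂) ⬝ (e₁ × e₂). Set n := c⁻¹ • (e₁ × e₂) and m := c⁻¹ • (f₁ × f₂). Then the matrix M₀ with columns e₁, e₂, n is invertible, and the matrix R := M₁ * M₀⁻¹ (where M₁ has columns f₁, f₂, m) satisfies Rᵀ * R = 1, det R = 1, R.mulVec e₁ = f₁, R.mulVec e₂ = f₂ and R.mulVec n = m. -/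
open Matrix

/-- The symmetric bilinear dot product on ℂ³ (not the Hermitian inner product). -/
def dot3 (x y : Fin 3 → ℂ) : ℂ := x 0 * y 0 + x 1 * y 1 + x 2 * y 2

/-- The standard cross product on ℂ³. -/
def cross3 (x y : Fin 3 → ℂ) : Fin 3 → ℂ := crossProduct x y

/-!
By Lagrange's identity `(a × b) ⬝ (a × b) = (a ⬝ a)(b ⬝ b) - (a ⬝ b)²`, the Gram matrix `Mᵀ M`
of the frame `M = [a b k(a × b)]` and its determinant `k (a × b) ⬝ (a × b)` depend only on
`a ⬝ a`, `a ⬝ b`, `b ⬝ b` and `k`. Hence the two frames share Gram matrix and determinant `c`,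
and whenever `M₁ᵀ M₁ = M₀ᵀ M₀` with `M₀` invertible, `R = M₁ M₀⁻¹` satisfies
`Rᵀ R = M₀⁻ᵀ M₀ᵀ M₀ M₀⁻¹ = 1` and `R M₀ = M₁`.
-/

theorem dot3_eq_dotProduct (x y : Fin 3 → ℂ) : dot3 x y = x ⬝ᵥ y := by
  simp [dot3, dotProduct, Fin.sum_univ_three]

section CommRing

variable {R : Type*} [CommRing R]

theorem cross_dot_cross_self (a b : Fin 3 → R) :
    a ⨯₃ b ⬝ᵥ a ⨯₃ b = a ⬝ᵥ a * b ⬝ᵥ b - (a ⬝ᵥ b) ^ 2 := by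
  rw [cross_dot_cross, dotProduct_comm b a]; ring

theorem of_mul_transpose_of {m n : Type*} [Fintype n] (v : m → n → R) :
    of v * (of v)ᵀ = of fun i j => v i ⬝ᵥ v j := rfl

theorem of_cross_frame_mul_transpose (a b : Fin 3 → R) (k : R) :
    of ![a, b, k • a ⨯₃ b] * (of ![a, b, k • a ⨯₃ b])ᵀ =
      !![a ⬝ᵥ a, a ⬝ᵥ b, 0; a ⬝ᵥ b, b ⬝ᵥ b, 0;
        0, 0, k ^ 2 * (a ⬝ᵥ a * b ⬝ᵥ b - (a ⬝ᵥ b) ^ 2)] := by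
  have hca : a ⨯₃ b ⬝ᵥ a = 0 := by rw [dotProduct_comm, dot_self_cross]
  have hcb : a ⨯₃ b ⬝ᵥ b = 0 := by rw [dotProduct_comm, dot_cross_self]
  rw [of_mul_transpose_of, ← cross_dot_cross_self]
  ext i j
  fin_cases i <;> fin_cases j <;>
    simp [dotProduct_comm b a, dot_self_cross, dot_cross_self, hca, hcb, smul_dotProduct,
      dotProduct_smul, sq, mul_assoc]

theorem det_transpose_of_cross_frame (a b : Fin 3 → R) (k : R) :
    (of ![a, b, k • a ⨯₃ b])ᵀ.det = k * (a ⬝ᵥ a * b ⬝ᵥ b - (a ⬝ᵥ b) ^ 2) := by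
  rw [det_transpose, ← cross_dot_cross_self, ← smul_eq_mul, ← smul_dotProduct,
    triple_product_permutation, triple_product_eq_det]
  rfl

end CommRing

section Rotation

variable {n α : Type*} [Fintype n] [DecidableEq n] [CommRing α]

theorem transpose_mul_self_eq_one_of_gram_eq {A B : Matrix n n α} (hA : IsUnit A.det)
    (h : Bᵀ * B = Aᵀ * A) : (B * A⁻¹)ᵀ * (B * A⁻¹) = 1 := by
  calc (B * A⁻¹)ᵀ * (B * A⁻¹) = A⁻¹ᵀ * (Bᵀ * B) * A⁻¹ := by
        rw [transpose_mul, Matrix.mul_assoc, Matrix.mul_assoc, Matrix.mul_assoc]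
    _ = (A * A⁻¹)ᵀ * (A * A⁻¹) := by
        rw [h, transpose_mul, Matrix.mul_assoc, Matrix.mul_assoc, Matrix.mul_assoc]
    _ = 1 := by rw [mul_nonsing_inv A hA, transpose_one, Matrix.mul_one]

omit [DecidableEq n] in
theorem mulVec_eq_of_mul_transpose_of {m : Type*} {R : Matrix n n α} {v w : m → n → α}
    (h : R * (of v)ᵀ = (of w)ᵀ) (j : m) : R *ᵥ v j = w j :=
  funext fun i => congrFun (congrFun h i) j

end Rotation

/-- The rolling rotation between two pointwise-isometric tangent frames is
complex-orthogonal with determinant 1 and maps frame to frame. -/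
theorem rolling_rotation (e₁ e₂ f₁ f₂ : Fin 3 → ℂ) (c : ℂ)
    (h11 : dot3 e₁ e₁ = dot3 f₁ f₁) (h12 : dot3 e₁ e₂ = dot3 f₁ f₂)
    (h22 : dot3 e₂ e₂ = dot3 f₂ f₂)
    (hc : c ≠ 0) (hc2 : c ^ 2 = dot3 (cross3 e₁ e₂) (cross3 e₁ e₂)) :
    let n : Fin 3 → ℂ := c⁻¹ • cross3 e₁ e₂
    let m : Fin 3 → ℂ := c⁻¹ • cross3 f₁ f₂
    let M₀ : Matrix (Fin 3) (Fin 3) ℂ := (Matrix.of ![e₁, e₂, n])ᵀ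
    let M₁ : Matrix (Fin 3) (Fin 3) ℂ := (Matrix.of ![f₁, f₂, m])ᵀ
    let R : Matrix (Fin 3) (Fin 3) ℂ := M₁ * M₀⁻¹
    IsUnit M₀ ∧ Rᵀ * R = 1 ∧ R.det = 1 ∧
      R.mulVec e₁ = f₁ ∧ R.mulVec e₂ = f₂ ∧ R.mulVec n = m := by
  intro n m M₀ M₁ R
  simp only [dot3_eq_dotProduct, cross3, cross_dot_cross_self] at h11 h12 h22 hc2
  have hdet₀ : M₀.det = c :=
    (det_transpose_of_cross_frame e₁ e₂ c⁻¹).trans (by rw [← hc2]; field_simp)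
  have hdet₁ : M₁.det = c :=
    (det_transpose_of_cross_frame f₁ f₂ c⁻¹).trans
      (by rw [← h11, ← h12, ← h22, ← hc2]; field_simp)
  have hunit : IsUnit M₀.det := hdet₀ ▸ hc.isUnit
  have hgram : M₁ᵀ * M₁ = M₀ᵀ * M₀ := by
    simp only [M₀, M₁, n, m, cross3, transpose_transpose, of_cross_frame_mul_transpose,
      h11, h12, h22]
  have hframe : R * M₀ = M₁ := nonsing_inv_mul_cancel_right M₀ M₁ hunit
  refine ⟨(isUnit_iff_isUnit_det M₀).2 hunit, transpose_mul_self_eq_one_of_gram_eq hunit hgram,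
    ?_, mulVec_eq_of_mul_transpose_of hframe 0, mulVec_eq_of_mul_transpose_of hframe 1,
    mulVec_eq_of_mul_transpose_of hframe 2⟩
  rw [det_mul, det_nonsing_inv, hdet₁, hdet₀, Ring.inverse_eq_inv, mul_inv_cancel₀ hc]
end

section
/- Let D ⊆ ℝ² be open and let x₀, t : D → ℂ³ and R : D → Matrix (Fin 3) (Fin 3) ℂ be twice continuously differentiable. Define x : D → ℂ³ by x p := (R p).mulVec (x₀ p) + t p and assume that for all p ∈ D and all v ∈ ℝ²: fderiv ℝ x p v = (R p).mulVec (fderiv ℝ x₀ p v). Then for all p ∈ D and all v, w ∈ ℝ²: (fderiv ℝ R p v).mulVec (fderiv ℝ x₀ p w) = (fderiv ℝ R p w).mulVec (fderiv ℝ x₀ p v). (This is the compatibility condition R⁻¹dR ∧ dx₀ = 0 obtained by applying d to the rolling equation (x,dx) = (R,t)(x₀,dx₀).) -/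
/-!
Differentiating `dx = R dx₀` once more gives
`d²x(v, w) = R d²x₀(v, w) + dR(v) dx₀(w)`. Both second derivatives are symmetric (Schwarz), so
exchanging `v` and `w` leaves `dR(v) dx₀(w) = dR(w) dx₀(v)`.
-/

open Matrix

noncomputable instance : NormedAddCommGroup (Matrix (Fin 3) (Fin 3) ℂ) :=
  Matrix.normedAddCommGroup

noncomputable instance : NormedSpace ℝ (Matrix (Fin 3) (Fin 3) ℂ) :=
  Matrix.normedSpace

open Filter Topology

section

variable {𝕜 E F G M : Type*} [NontriviallyNormedField 𝕜]
  [NormedAddCommGroup E] [NormedSpace 𝕜 E] [NormedAddCommGroup F] [NormedSpace 𝕜 F]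
  [NormedAddCommGroup G] [NormedSpace 𝕜 G] [NormedAddCommGroup M] [NormedSpace 𝕜 M]
  (B : M →L[𝕜] F →L[𝕜] G) {R : E → M} {y : E → F} {z : E → G} {p : E}

theorem fderiv_fderiv_apply_of_fderiv_eventuallyEq_bilinear_comp
    (hR : DifferentiableAt 𝕜 R p) (hy : DifferentiableAt 𝕜 (fderiv 𝕜 y) p)
    (hz : fderiv 𝕜 z =ᶠ[𝓝 p] fun q => (B (R q)).comp (fderiv 𝕜 y q)) (u a : E) :
    fderiv 𝕜 (fderiv 𝕜 z) p u a =
      B (R p) (fderiv 𝕜 (fderiv 𝕜 y) p u a) + B (fderiv 𝕜 R p u) (fderiv 𝕜 y p a) := by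
  have hBR : HasFDerivAt (fun q => B (R q)) (B.comp (fderiv 𝕜 R p)) p :=
    B.hasFDerivAt.comp p hR.hasFDerivAt
  rw [hz.fderiv_eq, (hBR.clm_comp hy.hasFDerivAt).fderiv]
  simp

theorem bilinear_fderiv_apply_comm_of_fderiv_eventuallyEq_bilinear_comp
    (hR : DifferentiableAt 𝕜 R p) (hy : DifferentiableAt 𝕜 (fderiv 𝕜 y) p)
    (hsy : IsSymmSndFDerivAt 𝕜 y p) (hsz : IsSymmSndFDerivAt 𝕜 z p)
    (hz : fderiv 𝕜 z =ᶠ[𝓝 p] fun q => (B (R q)).comp (fderiv 𝕜 y q)) (v w : E) :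
    B (fderiv 𝕜 R p v) (fderiv 𝕜 y p w) = B (fderiv 𝕜 R p w) (fderiv 𝕜 y p v) := by
  have h := fderiv_fderiv_apply_of_fderiv_eventuallyEq_bilinear_comp B hR hy hz v w
  rw [hsz, fderiv_fderiv_apply_of_fderiv_eventuallyEq_bilinear_comp B hR hy hz, hsy] at h
  exact (add_left_cancel h).symm

end

noncomputable def mulVecL : Matrix (Fin 3) (Fin 3) ℂ →L[ℝ] (Fin 3 → ℂ) →L[ℝ] (Fin 3 → ℂ) :=
  (Matrix.mulVecBilin ℝ ℝ).toContinuousBilinearMap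

/-- The compatibility condition R⁻¹dR ∧ dx₀ = 0 obtained by differentiating the
rolling equation (x, dx) = (R, t)(x₀, dx₀). -/
theorem rolling_compatibility (D : Set (ℝ × ℝ)) (hD : IsOpen D)
    (x₀ t : ℝ × ℝ → Fin 3 → ℂ) (R : ℝ × ℝ → Matrix (Fin 3) (Fin 3) ℂ)
    (hx₀ : ContDiffOn ℝ 2 x₀ D) (ht : ContDiffOn ℝ 2 t D) (hR : ContDiffOn ℝ 2 R D)
    (x : ℝ × ℝ → Fin 3 → ℂ)
    (hx : ∀ p, x p = (R p).mulVec (x₀ p) + t p)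
    (hdx : ∀ p ∈ D, ∀ v : ℝ × ℝ, fderiv ℝ x p v = (R p).mulVec (fderiv ℝ x₀ p v)) :
    ∀ p ∈ D, ∀ v w : ℝ × ℝ,
      (fderiv ℝ R p v).mulVec (fderiv ℝ x₀ p w) =
        (fderiv ℝ R p w).mulVec (fderiv ℝ x₀ p v) := by
  intro p hp
  have hpD : D ∈ 𝓝 p := hD.mem_nhds hp
  have hx₀p : ContDiffAt ℝ 2 x₀ p := hx₀.contDiffAt hpD
  have hRp : ContDiffAt ℝ 2 R p := hR.contDiffAt hpD
  have hxp : ContDiffAt ℝ 2 x p := by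
    rw [funext hx]
    exact ((mulVecL.contDiff.contDiffAt.comp p hRp).clm_apply hx₀p).add (ht.contDiffAt hpD)
  have hdx_nhds : fderiv ℝ x =ᶠ[𝓝 p] fun q => (mulVecL (R q)).comp (fderiv ℝ x₀ q) := by
    filter_upwards [hpD] with q hq
    exact ContinuousLinearMap.ext (hdx q hq)
  exact bilinear_fderiv_apply_comm_of_fderiv_eventuallyEq_bilinear_comp mulVecL
    (hRp.differentiableAt two_ne_zero)
    ((hx₀p.fderiv_right (m := 1) le_rfl).differentiableAt one_ne_zero)
    (hx₀p.isSymmSndFDerivAt (by simp)) (hxp.isSymmSndFDerivAt (by simp)) hdx_nhds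
end

section
/- Let D ⊆ ℝ² be open, let N₀ : D → ℂ³ be differentiable, and let R : D → Matrix (Fin 3) (Fin 3) ℂ be differentiable with (R p)ᵀ * R p = 1 and det (R p) = 1 for all p ∈ D. Define N : D → ℂ³ by N p := (R p).mulVec (N₀ p). Then for all p ∈ D and all v ∈ ℝ²: N₀ p × (((R p)ᵀ * fderiv ℝ R p v).mulVec (N₀ p)) = (R p)ᵀ.mulVec (N p × fderiv ℝ N p v) − N₀ p × fderiv ℝ N₀ p v. (This is the paper's formula ω = R⁻¹(N × dN) − N₀ × dN₀ for the connection form of a rolling, equation (2.3) combined with the definition of ω.) -/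
/-! The cofactor identity `Mᵀ (M a × M b) = det M • (a × b)` shows that a matrix with
`Mᵀ M = 1` and `det M = 1` satisfies `Mᵀ (M a × b) = a × Mᵀ b`. Applying this to `N = R N₀`
and the product rule `dN = dR N₀ + R dN₀` gives
`Rᵀ (N × dN) = N₀ × Rᵀ dR N₀ + N₀ × dN₀`. -/

open Matrix

section CrossProduct

variable {R : Type*} [CommRing R]

theorem Matrix.transpose_mulVec_cross_mulVec (M : Matrix (Fin 3) (Fin 3) R) (a b : Fin 3 → R) :
    Mᵀ *ᵥ ((M *ᵥ a) ⨯₃ (M *ᵥ b)) = M.det • (a ⨯₃ b) := by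
  ext k
  fin_cases k <;>
  · simp only [mulVec, dotProduct, cross_apply, transpose_apply, det_fin_three, Fin.sum_univ_three,
      Fin.reduceFinMk, Fin.isValue, cons_val, Pi.smul_apply, smul_eq_mul]
    ring

theorem Matrix.transpose_mulVec_mulVec_cross {M : Matrix (Fin 3) (Fin 3) R} (horth : Mᵀ * M = 1)
    (hdet : M.det = 1) (a b : Fin 3 → R) : Mᵀ *ᵥ ((M *ᵥ a) ⨯₃ b) = a ⨯₃ (Mᵀ *ᵥ b) :=
  calc Mᵀ *ᵥ ((M *ᵥ a) ⨯₃ b) = Mᵀ *ᵥ ((M *ᵥ a) ⨯₃ (M *ᵥ (Mᵀ *ᵥ b))) := by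
        rw [mulVec_mulVec, mul_eq_one_comm.mp horth, one_mulVec]
    _ = a ⨯₃ (Mᵀ *ᵥ b) := by rw [transpose_mulVec_cross_mulVec, hdet, one_smul]

end CrossProduct

section MulVecDeriv

attribute [local instance] Matrix.normedAddCommGroup Matrix.normedSpace

variable {m n E : Type*} [Fintype m] [Fintype n] [NormedAddCommGroup E] [NormedSpace ℝ E]

noncomputable def Matrix.mulVecCLM : Matrix m n ℂ →L[ℝ] (n → ℂ) →L[ℝ] (m → ℂ) :=
  LinearMap.toContinuousLinearMap
    (LinearMap.toContinuousLinearMap.toLinearMap ∘ₗ Matrix.mulVecBilin ℝ ℝ)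

theorem fderiv_mulVec_apply {A : E → Matrix m n ℂ} {u : E → n → ℂ} {x : E}
    (hA : DifferentiableAt ℝ A x) (hu : DifferentiableAt ℝ u x) (v : E) :
    fderiv ℝ (fun y => A y *ᵥ u y) x v = fderiv ℝ A x v *ᵥ u x + A x *ᵥ fderiv ℝ u x v :=
  (DFunLike.congr_fun (mulVecCLM.fderiv_of_bilinear hA hu) v).trans (add_comm _ _)

end MulVecDeriv

/-- The paper's formula ω = R⁻¹(N × dN) − N₀ × dN₀ for the connection form of a
rolling. -/
theorem connection_form_formula (D : Set (ℝ × ℝ)) (hD : IsOpen D)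
    (N₀ : ℝ × ℝ → Fin 3 → ℂ) (hN₀ : DifferentiableOn ℝ N₀ D)
    (R : ℝ × ℝ → Matrix (Fin 3) (Fin 3) ℂ) (hR : DifferentiableOn ℝ R D)
    (horth : ∀ p ∈ D, (R p)ᵀ * R p = 1) (hdet : ∀ p ∈ D, (R p).det = 1)
    (N : ℝ × ℝ → Fin 3 → ℂ) (hN : ∀ p, N p = (R p).mulVec (N₀ p)) :
    ∀ p ∈ D, ∀ v : ℝ × ℝ,
      cross3 (N₀ p) (((R p)ᵀ * fderiv ℝ R p v).mulVec (N₀ p)) =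
        (R p)ᵀ.mulVec (cross3 (N p) (fderiv ℝ N p v)) -
          cross3 (N₀ p) (fderiv ℝ N₀ p v) := by
  intro p hp v
  have hdN : fderiv ℝ N p v = fderiv ℝ R p v *ᵥ N₀ p + R p *ᵥ fderiv ℝ N₀ p v := by
    rw [funext hN]
    exact fderiv_mulVec_apply (hR.differentiableAt (hD.mem_nhds hp))
      (hN₀.differentiableAt (hD.mem_nhds hp)) v
  rw [cross3, cross3, cross3, hN p, transpose_mulVec_mulVec_cross (horth p hp) (hdet p hp), hdN,
    mulVec_add, mulVec_mulVec, mulVec_mulVec, horth p hp, one_mulVec, map_add, add_sub_cancel_right]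
end

section
/- Let D ⊆ ℝ² be open, let N₀ : D → ℂ³ be differentiable with (N₀ p) ⬝ (N₀ p) = 1 for all p, and let R : D → Matrix (Fin 3) (Fin 3) ℂ be differentiable with R p invertible for all p. Define R' : D → Matrix (Fin 3) (Fin 3) ℂ by R' p := R p * (1 − 2 • Matrix.vecMulVec (N₀ p) (N₀ p)). Then R' p is invertible, and for all p ∈ D and v ∈ ℝ²: N₀ p × (((R' p)⁻¹ * fderiv ℝ R' p v).mulVec (N₀ p)) = −(N₀ p × (((R p)⁻¹ * fderiv ℝ R p v).mulVec (N₀ p))) − 2 • (N₀ p × fderiv ℝ N₀ p v). (This is the paper's relation ω' = −ω − 2 N₀ × dN₀, equation (2.8), for the rolling with the other face.) -/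
open Matrix

theorem vecMulVec_add_vecMulVec_swap_mulVec {m R : Type*} [Fintype m] [CommRing R] {n dn : m → R}
    (hn : n ⬝ᵥ n = 1) (hdn : n ⬝ᵥ dn = 0) : (vecMulVec n dn + vecMulVec dn n) *ᵥ n = dn := by
  rw [add_mulVec, vecMulVec_mulVec, vecMulVec_mulVec, dotProduct_comm dn, hdn, hn,
    op_smul_eq_smul, op_smul_eq_smul, zero_smul, one_smul, zero_add]

section Householder

variable {m R : Type*} [Fintype m] [DecidableEq m] [CommRing R]

def householder (n : m → R) : Matrix m m R := 1 - 2 • vecMulVec n n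

theorem householder_mulVec (n w : m → R) : householder n *ᵥ w = w - 2 • (n ⬝ᵥ w) • n := by
  rw [householder, sub_mulVec, one_mulVec, smul_mulVec, vecMulVec_mulVec, op_smul_eq_smul]

variable {n : m → R}

theorem householder_mulVec_self (hn : n ⬝ᵥ n = 1) : householder n *ᵥ n = -n := by
  rw [householder_mulVec, hn, one_smul, two_nsmul]
  abel

theorem householder_mul_self (hn : n ⬝ᵥ n = 1) : householder n * householder n = 1 := by
  have hP : vecMulVec n n * vecMulVec n n = vecMulVec n n := by
    rw [vecMulVec_mul_vecMulVec, hn, one_smul]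
  simp only [householder, two_nsmul, sub_mul, mul_sub, add_mul, mul_add, one_mul, mul_one, hP]
  abel

theorem isUnit_householder (hn : n ⬝ᵥ n = 1) : IsUnit (householder n) :=
  IsUnit.of_mul_eq_one _ (householder_mul_self hn)

theorem inv_householder (hn : n ⬝ᵥ n = 1) : (householder n)⁻¹ = householder n :=
  inv_eq_right_inv (householder_mul_self hn)

end Householder

theorem cross_householder_mulVec {R : Type*} [CommRing R] (n w : Fin 3 → R) :
    n ⨯₃ (householder n *ᵥ w) = n ⨯₃ w := by
  rw [householder_mulVec, map_sub, map_nsmul, map_smul, cross_self, smul_zero, smul_zero, sub_zero]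

theorem inv_mul_product_rule {m R : Type*} [Fintype m] [DecidableEq m] [CommRing R]
    {A S : Matrix m m R} (hA : IsUnit A) (dA dS : Matrix m m R) :
    (A * S)⁻¹ * (A * dS + dA * S) = S⁻¹ * dS + S⁻¹ * (A⁻¹ * dA) * S := by
  rw [Matrix.mul_inv_rev, mul_add, mul_assoc, ← mul_assoc A⁻¹,
    nonsing_inv_mul _ ((isUnit_iff_isUnit_det A).mp hA), one_mul]
  simp only [mul_assoc]

section Calculus

variable {X : Type*} [NormedAddCommGroup X] [NormedSpace ℝ X]

section Bilinear

variable {E F G : Type*} [NormedAddCommGroup E] [NormedSpace ℝ E] [FiniteDimensional ℝ E]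
  [NormedAddCommGroup F] [NormedSpace ℝ F] [FiniteDimensional ℝ F]
  [NormedAddCommGroup G] [NormedSpace ℝ G]
  (B : E →ₗ[ℝ] F →ₗ[ℝ] G) {f : X → E} {g : X → F} {x : X}

theorem differentiableAt_bilinear (hf : DifferentiableAt ℝ f x) (hg : DifferentiableAt ℝ g x) :
    DifferentiableAt ℝ (fun y => B (f y) (g y)) x :=
  (B.toContinuousBilinearMap.hasFDerivAt_of_bilinear hf.hasFDerivAt hg.hasFDerivAt).differentiableAt

theorem fderiv_bilinear_apply (hf : DifferentiableAt ℝ f x) (hg : DifferentiableAt ℝ g x)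
    (v : X) :
    fderiv ℝ (fun y => B (f y) (g y)) x v = B (f x) (fderiv ℝ g x v) + B (fderiv ℝ f x v) (g x) := by
  have h := B.toContinuousBilinearMap.fderiv_of_bilinear hf hg
  simp only [LinearMap.toContinuousBilinearMap_apply] at h
  rw [h]
  simp

end Bilinear

theorem dotProduct_fderiv_eq_zero {ι : Type*} [Fintype ι] {N : X → ι → ℂ}
    (hN : ∀ q, N q ⬝ᵥ N q = 1) {x : X} (hNx : DifferentiableAt ℝ N x) (v : X) :
    N x ⬝ᵥ fderiv ℝ N x v = 0 := by
  have h := fderiv_bilinear_apply (dotProductBilin ℝ ℝ) hNx hNx v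
  simp only [dotProductBilin_apply_apply, hN, fderiv_const_apply] at h
  rw [_root_.zero_apply, dotProduct_comm (fderiv ℝ N x v), ← two_mul] at h
  exact (mul_eq_zero.mp h.symm).resolve_left two_ne_zero

variable {N : X → Fin 3 → ℂ} {x : X}

theorem hasFDerivAt_householder (hN : DifferentiableAt ℝ N x) :
    HasFDerivAt (fun q => householder (N q))
      (-(2 • fderiv ℝ (fun y => vecMulVec (N y) (N y)) x)) x :=
  ((differentiableAt_bilinear (vecMulVecBilin ℝ ℝ) hN hN).hasFDerivAt.const_smul 2).const_sub 1

theorem fderiv_householder_apply (hN : DifferentiableAt ℝ N x) (v : X) :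
    fderiv ℝ (fun q => householder (N q)) x v =
      -(2 • (vecMulVec (N x) (fderiv ℝ N x v) + vecMulVec (fderiv ℝ N x v) (N x))) := by
  rw [(hasFDerivAt_householder hN).fderiv]
  exact congrArg (fun M : Matrix (Fin 3) (Fin 3) ℂ => -(2 • M))
    (fderiv_bilinear_apply (vecMulVecBilin ℝ ℝ) hN hN v)

theorem fderiv_matrix_mul_apply {A B : X → Matrix (Fin 3) (Fin 3) ℂ}
    (hA : DifferentiableAt ℝ A x) (hB : DifferentiableAt ℝ B x) (v : X) :
    fderiv ℝ (fun q => A q * B q) x v = A x * fderiv ℝ B x v + fderiv ℝ A x v * B x :=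
  fderiv_bilinear_apply (LinearMap.mul ℝ (Matrix (Fin 3) (Fin 3) ℂ)) hA hB v

end Calculus

/-- The paper's relation ω' = −ω − 2 N₀ × dN₀, equation (2.8), for the rolling
with the other face R' = R(I − 2N₀N₀ᵀ). -/
theorem other_face_connection (D : Set (ℝ × ℝ)) (hD : IsOpen D)
    (N₀ : ℝ × ℝ → Fin 3 → ℂ) (hN₀ : DifferentiableOn ℝ N₀ D)
    (hunit : ∀ p, dot3 (N₀ p) (N₀ p) = 1)
    (R : ℝ × ℝ → Matrix (Fin 3) (Fin 3) ℂ) (hR : DifferentiableOn ℝ R D)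
    (hinv : ∀ p ∈ D, IsUnit (R p))
    (R' : ℝ × ℝ → Matrix (Fin 3) (Fin 3) ℂ)
    (hR' : ∀ p, R' p = R p * (1 - 2 • Matrix.vecMulVec (N₀ p) (N₀ p))) :
    ∀ p ∈ D, IsUnit (R' p) ∧
      ∀ v : ℝ × ℝ,
        cross3 (N₀ p) (((R' p)⁻¹ * fderiv ℝ R' p v).mulVec (N₀ p)) =
          -(cross3 (N₀ p) (((R p)⁻¹ * fderiv ℝ R p v).mulVec (N₀ p))) -
            2 • cross3 (N₀ p) (fderiv ℝ N₀ p v) := by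
  intro p hp
  have hNp := hN₀.differentiableAt (hD.mem_nhds hp)
  have hRp := hR.differentiableAt (hD.mem_nhds hp)
  have hunit' : ∀ q, N₀ q ⬝ᵥ N₀ q = 1 := fun q => dot3_eq_dotProduct _ _ ▸ hunit q
  have hR'_eq : R' = fun q => R q * householder (N₀ q) := funext hR'
  subst hR'_eq
  refine ⟨(hinv p hp).mul (isUnit_householder (hunit' p)), fun v => ?_⟩
  rw [fderiv_matrix_mul_apply hRp (hasFDerivAt_householder hNp).differentiableAt,
    fderiv_householder_apply hNp, inv_mul_product_rule (hinv p hp), inv_householder (hunit' p)]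
  simp only [cross3, add_mulVec, ← mulVec_mulVec, neg_mulVec, smul_mulVec,
    vecMulVec_add_vecMulVec_swap_mulVec (hunit' p) (dotProduct_fderiv_eq_zero hunit' hNp v),
    householder_mulVec_self (hunit' p), cross_householder_mulVec, mulVec_neg, map_add, map_neg,
    map_nsmul]
  abel
end

section
/- Let e₁, e₂ ∈ ℂ³ and c ∈ ℂ with c ≠ 0 and c² = (e₁ × e₂) ⬝ (e₁ × e₂), and set N₀ := c⁻¹ • (e₁ × e₂). Then for all a_u, a_v ∈ ℂ³ the following are equivalent: (i) for all ω_u, ω_v ∈ ℂ³ with N₀ ⬝ ω_u = 0, N₀ ⬝ ω_v = 0 and ω_u × e₂ = ω_v × e₁, one has a_u ⬝ ω_v = a_v ⬝ ω_u; (ii) a_u ⬝ e₁ = 0, a_v ⬝ e₂ = 0 and a_u ⬝ e₂ + a_v ⬝ e₁ = 0. (This is the paper's equivalence (2.9) and its converse: for a ℂ³-valued 1-form a = a_u du + a_v dv, a^T ∧ ω = 0 for every connection form ω satisfying (2.4) if and only if a^T ⊙ dx₀ = 0.) -/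
open Matrix

section CommRing

variable {R : Type*} [CommRing R] (e₁ e₂ : Fin 3 → R)

-- Cramer's rule in the frame `(e₁, e₂, e₁ ⨯₃ e₂)`.
theorem cross_dotProduct_self_smul_eq (w : Fin 3 → R) :
    (e₁ ⨯₃ e₂ ⬝ᵥ e₁ ⨯₃ e₂) • w =
      (e₁ ⨯₃ e₂ ⬝ᵥ w ⨯₃ e₂) • e₁ - (e₁ ⨯₃ e₂ ⬝ᵥ w ⨯₃ e₁) • e₂ + (e₁ ⨯₃ e₂ ⬝ᵥ w) • e₁ ⨯₃ e₂ := by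
  ext i
  fin_cases i <;> simp [cross_apply, dotProduct, Fin.sum_univ_three] <;> ring

theorem smul_add_smul_cross_right (p q : R) :
    (p • e₁ + q • e₂) ⨯₃ e₂ = p • e₁ ⨯₃ e₂ := by
  simp only [map_add, map_smul, LinearMap.add_apply, LinearMap.smul_apply, cross_self, smul_zero,
    add_zero]

theorem smul_add_smul_cross_left (p q : R) :
    (p • e₁ + q • e₂) ⨯₃ e₁ = (-q) • e₁ ⨯₃ e₂ := by
  simp only [map_add, map_smul, LinearMap.add_apply, LinearMap.smul_apply, cross_self, smul_zero,
    zero_add, ← cross_anticomm e₁ e₂, smul_neg, neg_smul]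

theorem cross_dotProduct_smul_add_smul (p q : R) : e₁ ⨯₃ e₂ ⬝ᵥ (p • e₁ + q • e₂) = 0 := by
  rw [dotProduct_add, dotProduct_smul, dotProduct_smul, dotProduct_comm, dot_self_cross,
    dotProduct_comm, dot_cross_self, smul_zero, smul_zero, add_zero]

theorem forall_dotProduct_smul_add_smul_eq_iff (au av : Fin 3 → R) :
    (∀ p q r : R, au ⬝ᵥ (r • e₁ + (-p) • e₂) = av ⬝ᵥ (p • e₁ + q • e₂)) ↔
      au ⬝ᵥ e₁ = 0 ∧ av ⬝ᵥ e₂ = 0 ∧ au ⬝ᵥ e₂ + av ⬝ᵥ e₁ = 0 := by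
  simp only [dotProduct_add, dotProduct_smul, smul_eq_mul]
  constructor
  · intro h
    refine ⟨?_, ?_, ?_⟩
    · simpa using h 0 0 1
    · simpa using (h 0 1 0).symm
    · linear_combination -h 1 0 0
  · rintro ⟨h₁, h₂, h₃⟩ p q r
    linear_combination r * h₁ - q * h₂ - p * h₃

end CommRing

section Field

variable {K : Type*} [Field K] {e₁ e₂ : Fin 3 → K}

theorem exists_eq_smul_add_smul_of_cross_dotProduct_eq_zero
    (hn : e₁ ⨯₃ e₂ ⬝ᵥ e₁ ⨯₃ e₂ ≠ 0) {w : Fin 3 → K} (hw : e₁ ⨯₃ e₂ ⬝ᵥ w = 0) :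
    ∃ p q : K, w = p • e₁ + q • e₂ := by
  refine ⟨(e₁ ⨯₃ e₂ ⬝ᵥ w ⨯₃ e₂) / (e₁ ⨯₃ e₂ ⬝ᵥ e₁ ⨯₃ e₂),
    -(e₁ ⨯₃ e₂ ⬝ᵥ w ⨯₃ e₁) / (e₁ ⨯₃ e₂ ⬝ᵥ e₁ ⨯₃ e₂), ?_⟩
  apply smul_right_injective _ hn
  simp only [smul_add, smul_smul, mul_div_cancel₀ _ hn]
  rw [cross_dotProduct_self_smul_eq, hw, zero_smul, add_zero, neg_smul, sub_eq_add_neg]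

theorem tangent_pair_cross_eq_iff_exists (hn : e₁ ⨯₃ e₂ ⬝ᵥ e₁ ⨯₃ e₂ ≠ 0) (ωu ωv : Fin 3 → K) :
    (e₁ ⨯₃ e₂ ⬝ᵥ ωu = 0 ∧ e₁ ⨯₃ e₂ ⬝ᵥ ωv = 0 ∧ ωu ⨯₃ e₂ = ωv ⨯₃ e₁) ↔
      ∃ p q r : K, ωu = p • e₁ + q • e₂ ∧ ωv = r • e₁ + (-p) • e₂ := by
  constructor
  · rintro ⟨hu, hv, hcross⟩
    obtain ⟨p, q, rfl⟩ := exists_eq_smul_add_smul_of_cross_dotProduct_eq_zero hn hu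
    obtain ⟨r, s, rfl⟩ := exists_eq_smul_add_smul_of_cross_dotProduct_eq_zero hn hv
    rw [smul_add_smul_cross_right, smul_add_smul_cross_left] at hcross
    have hne : e₁ ⨯₃ e₂ ≠ 0 := fun h => hn (by rw [h, zero_dotProduct])
    obtain rfl : s = -p := by rw [smul_left_injective K hne hcross, neg_neg]
    exact ⟨p, q, r, rfl, rfl⟩
  · rintro ⟨p, q, r, rfl, rfl⟩
    exact ⟨cross_dotProduct_smul_add_smul .., cross_dotProduct_smul_add_smul ..,
      by rw [smul_add_smul_cross_right, smul_add_smul_cross_left, neg_neg]⟩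

end Field

/-- The paper's equivalence (2.9) and its converse: aᵀ ∧ ω = 0 for every
connection form ω satisfying (2.4) if and only if aᵀ ⊙ dx₀ = 0. -/
theorem wedge_vanishes_iff_symm_product_vanishes
    (e₁ e₂ : Fin 3 → ℂ) (c : ℂ) (hc : c ≠ 0)
    (hc2 : c ^ 2 = dot3 (cross3 e₁ e₂) (cross3 e₁ e₂))
    (N₀ : Fin 3 → ℂ) (hN₀ : N₀ = c⁻¹ • cross3 e₁ e₂) :
    ∀ au av : Fin 3 → ℂ,
      ((∀ ωu ωv : Fin 3 → ℂ, dot3 N₀ ωu = 0 → dot3 N₀ ωv = 0 →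
          cross3 ωu e₂ = cross3 ωv e₁ → dot3 au ωv = dot3 av ωu) ↔
        (dot3 au e₁ = 0 ∧ dot3 av e₂ = 0 ∧ dot3 au e₂ + dot3 av e₁ = 0)) := by
  intro au av
  have hn : e₁ ⨯₃ e₂ ⬝ᵥ e₁ ⨯₃ e₂ ≠ 0 := by
    rw [← dot3_eq_dotProduct, ← cross3, ← hc2]
    exact pow_ne_zero 2 hc
  have hN₀_dot (ω : Fin 3 → ℂ) : N₀ ⬝ᵥ ω = 0 ↔ e₁ ⨯₃ e₂ ⬝ᵥ ω = 0 := by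
    rw [hN₀, smul_dotProduct, smul_eq_mul, mul_eq_zero, cross3, or_iff_right (inv_ne_zero hc)]
  simp only [hN₀_dot, dot3_eq_dotProduct, cross3]
  rw [← forall_dotProduct_smul_add_smul_eq_iff]
  refine ⟨fun h p q r => ?_, fun h ωu ωv hu hv hcross => ?_⟩
  · obtain ⟨hu, hv, hcross⟩ := (tangent_pair_cross_eq_iff_exists hn _ _).2 ⟨p, q, r, rfl, rfl⟩
    exact h _ _ hu hv hcross
  · obtain ⟨p, q, r, rfl, rfl⟩ := (tangent_pair_cross_eq_iff_exists hn ωu ωv).1 ⟨hu, hv, hcross⟩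
    exact h p q r
end
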